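/- Let ρ ∈ (−1,1) and u ∈ ℝ. Then ∫_{ℝ²} (x−u)⁺·(y−u)⁺ · f_ρ(x,y) dx dy − (φ(u) − u·Φ̄(u))² = (ρ + u²)·ℓ(u,u,ρ) − 2u·φ(u)·Φ̄(u(1−ρ)/√(1−ρ²)) + √(1−ρ²)·φ(u/√(1+ρ))² − (φ(u) − u·Φ̄(u))². In other words, if (X,Y) is standard bivariate normal with correlation ρ, the covariance of (X−u)⁺ and (Y−u)⁺ equals (ρ + u²)·ℓ(u,u,ρ) − 2u·φ(u)·Φ̄(u(1−ρ)/√(1−ρ²)) + √(1−ρ²)·φ(u/√(1+ρ))² − (φ(u) − u·Φ̄(u))². -/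

import Mathlib

open MeasureTheory

/-- Density of the standard normal distribution. -/
noncomputable def stdNormalPDF (x : ℝ) : ℝ :=
  (Real.sqrt (2 * Real.pi))⁻¹ * Real.exp (-x ^ 2 / 2)

/-- Survival function of the standard normal distribution. -/
noncomputable def stdNormalSurv (x : ℝ) : ℝ :=
  ∫ t in Set.Ioi x, stdNormalPDF t

/-- Density of the standard bivariate normal distribution with correlation `ρ`. -/
noncomputable def bvnPDF (ρ x y : ℝ) : ℝ :=
  (2 * Real.pi * Real.sqrt (1 - ρ ^ 2))⁻¹ *
    Real.exp (-(x ^ 2 - 2 * ρ * x * y + y ^ 2) / (2 * (1 - ρ ^ 2)))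

/-- Total probability of the truncated standard bivariate normal distribution. -/
noncomputable def ell (u v ρ : ℝ) : ℝ :=
  ∫ x in Set.Ioi u, ∫ y in Set.Ioi v, bvnPDF ρ x y

/-!
Write `f` for the density and `s² = 1 - ρ²`. Since `∂ₓ f = -(x - ρ y) f / s²`, the identity
`s² (x - u) (y - v) = s² (ρ + u v) + (y - v - ρ u) (x - ρ y) + ((ρ y - u - ρ v) (y - ρ x) - s² ρ)`
writes `(x - u) (y - v) f` as `(ρ + u v) f` plus an `x`-derivative and a `y`-derivative (Stein's
identity). Integrating over `(u, ∞) × (v, ∞)`, each derivative term first in its own variable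
(Fubini), leaves only values on the boundary lines `x = u` and `y = v`; these integrate to Gaussian
tails because `f (x, ·)` is a normal density with mean `ρ x` and variance `s²`. For `u = v` the
remaining corner term `s² f (u, u)` is `s φ(u / √(1 + ρ))²`.
-/

open Real Set

theorem integral_Ioi_of_hasDerivAt_of_integrableOn {E : Type*} [NormedAddCommGroup E]
    [NormedSpace ℝ E] [CompleteSpace E] {f f' : ℝ → E} {a : ℝ}
    (hderiv : ∀ x ∈ Ici a, HasDerivAt f (f' x) x) (hf' : IntegrableOn f' (Ioi a))
    (hf : IntegrableOn f (Ioi a)) :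
    ∫ x in Ioi a, f' x = -f a := by
  have hlim := tendsto_zero_of_hasDerivAt_of_integrableOn_Ioi
    (fun x hx => hderiv x (Ioi_subset_Ici_self hx)) hf' hf
  rw [integral_Ioi_of_hasDerivAt_of_tendsto' hderiv hf' hlim, zero_sub]

theorem setIntegral_Ioi_comp_sub_div {E : Type*} [NormedAddCommGroup E] [NormedSpace ℝ E]
    (g : ℝ → E) (a m : ℝ) {σ : ℝ} (hσ : 0 < σ) :
    ∫ y in Ioi a, g ((y - m) / σ) = σ • ∫ t in Ioi ((a - m) / σ), g t := by
  calc ∫ y in Ioi a, g ((y - m) / σ)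
      = ∫ y, (Ioi ((a - m) / σ)).indicator g ((y - m) / σ) := by
        rw [← integral_indicator measurableSet_Ioi]
        congr 1 with y
        simp [indicator, div_lt_div_iff_of_pos_right hσ]
    _ = ∫ y, (Ioi ((a - m) / σ)).indicator g (y / σ) :=
        integral_sub_right_eq_self (fun y => (Ioi ((a - m) / σ)).indicator g (y / σ)) m
    _ = σ • ∫ t in Ioi ((a - m) / σ), g t := by
        rw [Measure.integral_comp_div, abs_of_pos hσ, integral_indicator measurableSet_Ioi]

theorem setIntegral_prod_symm {α β E : Type*} [MeasurableSpace α] [MeasurableSpace β]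
    [NormedAddCommGroup E] [NormedSpace ℝ E] {μ : Measure α} {ν : Measure β} [SFinite μ]
    [SFinite ν] (f : α × β → E) {s : Set α} {t : Set β}
    (hf : IntegrableOn f (s ×ˢ t) (μ.prod ν)) :
    ∫ z in s ×ˢ t, f z ∂μ.prod ν = ∫ y in t, ∫ x in s, f (x, y) ∂μ ∂ν := by
  simp only [← Measure.prod_restrict s t, IntegrableOn] at hf ⊢
  exact integral_prod_symm f hf

theorem integral_max_sub_mul_max_sub_mul {μ : Measure (ℝ × ℝ)} (g : ℝ × ℝ → ℝ) (u v : ℝ) :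
    ∫ p, max (p.1 - u) 0 * max (p.2 - v) 0 * g p ∂μ
      = ∫ p in Ioi u ×ˢ Ioi v, (p.1 - u) * (p.2 - v) * g p ∂μ := by
  rw [← integral_indicator (measurableSet_Ioi.prod measurableSet_Ioi)]
  congr 1 with p
  by_cases hx : u < p.1 <;> by_cases hy : v < p.2 <;>
    simp [indicator, hx, hy, le_of_lt, not_lt.1]

theorem integrable_pow_mul_exp_neg_mul_sq {b : ℝ} (hb : 0 < b) (n : ℕ) :
    Integrable fun x : ℝ => x ^ n * exp (-b * x ^ 2) := by
  simpa using
    integrable_rpow_mul_exp_neg_mul_sq hb (s := n) (neg_one_lt_zero.trans_le n.cast_nonneg)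

theorem integral_Ioi_stdNormalPDF_comp (a m : ℝ) {σ : ℝ} (hσ : 0 < σ) :
    ∫ y in Ioi a, stdNormalPDF ((y - m) / σ) / σ = stdNormalSurv ((a - m) / σ) := by
  rw [integral_div, setIntegral_Ioi_comp_sub_div stdNormalPDF a m hσ, smul_eq_mul,
    mul_div_cancel_left₀ _ hσ.ne', stdNormalSurv]

theorem bvnPDF_nonneg (ρ x y : ℝ) : 0 ≤ bvnPDF ρ x y := by
  unfold bvnPDF
  positivity

theorem bvnPDF_comm (ρ x y : ℝ) : bvnPDF ρ x y = bvnPDF ρ y x := by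
  unfold bvnPDF
  ring_nf

theorem continuous_bvnPDF (ρ : ℝ) : Continuous fun p : ℝ × ℝ => bvnPDF ρ p.1 p.2 := by
  unfold bvnPDF
  fun_prop

theorem hasDerivAt_bvnPDF_snd (ρ x y : ℝ) :
    HasDerivAt (bvnPDF ρ x) (-((y - ρ * x) / (1 - ρ ^ 2)) * bvnPDF ρ x y) y := by
  have hq : HasDerivAt (fun y => -(x ^ 2 - 2 * ρ * x * y + y ^ 2) / (2 * (1 - ρ ^ 2)))
      (-((y - ρ * x) / (1 - ρ ^ 2))) y :=
    ((((hasDerivAt_id' y).const_mul (2 * ρ * x)).const_sub (x ^ 2)).add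
      (hasDerivAt_pow 2 y)).neg.div_const (2 * (1 - ρ ^ 2)) |>.congr_deriv
        (by push_cast; rw [div_eq_mul_inv, mul_inv]; ring)
  exact (hq.exp.const_mul _).congr_deriv (by rw [bvnPDF]; ring)

section Bivariate

variable {ρ : ℝ}

theorem one_sub_sq_pos (hρ : |ρ| < 1) : 0 < 1 - ρ ^ 2 := by
  rw [sub_pos, ← sq_abs]
  exact pow_lt_one₀ (abs_nonneg ρ) hρ two_ne_zero

theorem bvnPDF_eq_mul (hρ : |ρ| < 1) (x y : ℝ) :
    bvnPDF ρ x y = stdNormalPDF x * (stdNormalPDF ((y - ρ * x) / √(1 - ρ ^ 2)) / √(1 - ρ ^ 2)) := by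
  have hs := one_sub_sq_pos hρ
  have hexp : -(x ^ 2 - 2 * ρ * x * y + y ^ 2) / (2 * (1 - ρ ^ 2))
      = -x ^ 2 / 2 + -((y - ρ * x) / √(1 - ρ ^ 2)) ^ 2 / 2 := by
    rw [div_pow, sq_sqrt hs.le]
    field_simp
    ring
  unfold bvnPDF stdNormalPDF
  have hnorm : (2 * π * √(1 - ρ ^ 2))⁻¹ = (√(2 * π))⁻¹ * (√(2 * π))⁻¹ / √(1 - ρ ^ 2) := by
    rw [← mul_inv, mul_self_sqrt (by positivity), div_eq_mul_inv, mul_inv]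
  rw [hexp, exp_add, hnorm]
  ring

theorem bvnPDF_le (hρ : |ρ| < 1) (x y : ℝ) :
    bvnPDF ρ x y ≤ (2 * π * √(1 - ρ ^ 2))⁻¹ *
      (exp (-(2 * (1 + |ρ|))⁻¹ * x ^ 2) * exp (-(2 * (1 + |ρ|))⁻¹ * y ^ 2)) := by
  have hs := one_sub_sq_pos hρ
  unfold bvnPDF
  gcongr
  rw [← exp_add, exp_le_exp, div_le_iff₀ (by positivity)]
  have hρxy : 2 * ρ * x * y ≤ |ρ| * (x ^ 2 + y ^ 2) := by
    rcases abs_cases ρ with ⟨h, _⟩ | ⟨h, _⟩ <;> rw [h] <;>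
      nlinarith [sq_nonneg (x - y), sq_nonneg (x + y)]
  have hrhs : (-(2 * (1 + |ρ|))⁻¹ * x ^ 2 + -(2 * (1 + |ρ|))⁻¹ * y ^ 2) * (2 * (1 - ρ ^ 2))
      = -(1 - |ρ|) * (x ^ 2 + y ^ 2) := by
    rw [← sq_abs ρ]
    field_simp
    ring
  linarith

theorem integrable_pow_mul_bvnPDF_snd (hρ : |ρ| < 1) (x : ℝ) (n : ℕ) :
    Integrable fun t => t ^ n * bvnPDF ρ x t := by
  set δ := (2 * (1 + |ρ|))⁻¹
  set K := (2 * π * √(1 - ρ ^ 2))⁻¹ * exp (-δ * x ^ 2)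
  refine ((integrable_pow_mul_exp_neg_mul_sq (b := δ) (by positivity) n).const_mul K).mono
    ?_ (ae_of_all _ fun t => ?_)
  · exact ((continuous_pow n).mul
      ((continuous_bvnPDF ρ).comp (Continuous.prodMk_right x))).aestronglyMeasurable
  · simp only [norm_mul, Real.norm_of_nonneg (bvnPDF_nonneg ρ x t),
      Real.norm_of_nonneg (exp_pos _).le, Real.norm_of_nonneg (by positivity : 0 ≤ K)]
    calc ‖t ^ n‖ * bvnPDF ρ x t
        ≤ ‖t ^ n‖ * ((2 * π * √(1 - ρ ^ 2))⁻¹ * (exp (-δ * x ^ 2) * exp (-δ * t ^ 2))) :=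
          mul_le_mul_of_nonneg_left (bvnPDF_le hρ x t) (norm_nonneg _)
      _ = K * (‖t ^ n‖ * exp (-δ * t ^ 2)) := by ring

theorem integrable_pow_mul_pow_mul_bvnPDF (hρ : |ρ| < 1) (i j : ℕ) :
    Integrable fun p : ℝ × ℝ => p.1 ^ i * p.2 ^ j * bvnPDF ρ p.1 p.2 := by
  set δ := (2 * (1 + |ρ|))⁻¹
  set K := (2 * π * √(1 - ρ ^ 2))⁻¹
  have hδ : 0 < δ := by positivity
  refine (((integrable_pow_mul_exp_neg_mul_sq hδ i).mul_prod
    (integrable_pow_mul_exp_neg_mul_sq hδ j)).const_mul K).mono ?_ (ae_of_all _ fun p => ?_)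
  · exact (((continuous_fst.pow i).mul (continuous_snd.pow j)).mul
      (continuous_bvnPDF ρ)).aestronglyMeasurable
  · simp only [norm_mul, Real.norm_of_nonneg (bvnPDF_nonneg ρ p.1 p.2),
      Real.norm_of_nonneg (exp_pos _).le, Real.norm_of_nonneg (by positivity : 0 ≤ K)]
    calc ‖p.1 ^ i‖ * ‖p.2 ^ j‖ * bvnPDF ρ p.1 p.2
        ≤ ‖p.1 ^ i‖ * ‖p.2 ^ j‖ * (K * (exp (-δ * p.1 ^ 2) * exp (-δ * p.2 ^ 2))) :=
          mul_le_mul_of_nonneg_left (bvnPDF_le hρ p.1 p.2) (by positivity)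
      _ = K * (‖p.1 ^ i‖ * exp (-δ * p.1 ^ 2) * (‖p.2 ^ j‖ * exp (-δ * p.2 ^ 2))) := by ring

open Polynomial in
theorem integrable_eval_mul_bvnPDF_snd (hρ : |ρ| < 1) (x : ℝ) (P : ℝ[X]) :
    Integrable fun t => P.eval t * bvnPDF ρ x t := by
  induction P using Polynomial.induction_on' with
  | add p q hp hq => exact (hp.add hq).congr (ae_of_all _ fun t => by simp [add_mul])
  | monomial n a =>
    convert (integrable_pow_mul_bvnPDF_snd hρ x n).const_mul a using 1; ext t; simp [mul_assoc]

theorem integrable_eval_mul_bvnPDF (hρ : |ρ| < 1) (P : MvPolynomial (Fin 2) ℝ) :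
    Integrable fun p : ℝ × ℝ => MvPolynomial.eval ![p.1, p.2] P * bvnPDF ρ p.1 p.2 := by
  induction P using MvPolynomial.induction_on' with
  | monomial s a =>
    convert (integrable_pow_mul_pow_mul_bvnPDF hρ (s 0) (s 1)).const_mul a using 1
    ext p
    simp [MvPolynomial.eval_monomial, Finsupp.prod_fintype, Fin.prod_univ_two, mul_assoc]
  | add p q hp hq => exact (hp.add hq).congr (ae_of_all _ fun t => by simp [add_mul])

theorem integral_Ioi_bvnPDF_snd (hρ : |ρ| < 1) (x a : ℝ) :
    ∫ t in Ioi a, bvnPDF ρ x t = stdNormalPDF x * stdNormalSurv ((a - ρ * x) / √(1 - ρ ^ 2)) := by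
  simp_rw [bvnPDF_eq_mul hρ x]
  rw [integral_const_mul,
    integral_Ioi_stdNormalPDF_comp a (ρ * x) (sqrt_pos.2 (one_sub_sq_pos hρ))]

theorem integral_Ioi_bvnPDF_fst (hρ : |ρ| < 1) (y a : ℝ) :
    ∫ t in Ioi a, bvnPDF ρ t y = stdNormalPDF y * stdNormalSurv ((a - ρ * y) / √(1 - ρ ^ 2)) := by
  simp_rw [bvnPDF_comm ρ _ y]
  exact integral_Ioi_bvnPDF_snd hρ y a

open Polynomial in
/-- Stein's identity for the conditional law of `Y` given `X = x`: the integrand is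
`-(1 - ρ²)` times the derivative of `t ↦ (b t - c) f(x, t)`. -/
theorem integral_Ioi_stein_bvnPDF_snd (hρ : |ρ| < 1) (x a b c : ℝ) :
    ∫ t in Ioi a, ((b * t - c) * (t - ρ * x) - (1 - ρ ^ 2) * b) * bvnPDF ρ x t
      = (1 - ρ ^ 2) * (b * a - c) * bvnPDF ρ x a := by
  have hs : 1 - ρ ^ 2 ≠ 0 := (one_sub_sq_pos hρ).ne'
  have hderiv : ∀ t ∈ Ici a, HasDerivAt (fun t => -(1 - ρ ^ 2) * (b * t - c) * bvnPDF ρ x t)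
      (((b * t - c) * (t - ρ * x) - (1 - ρ ^ 2) * b) * bvnPDF ρ x t) t := fun t _ =>
    ((((hasDerivAt_id' t).const_mul b).sub_const c).const_mul (-(1 - ρ ^ 2))).mul
      (hasDerivAt_bvnPDF_snd ρ x t) |>.congr_deriv (by field_simp; ring)
  have hF := integrable_eval_mul_bvnPDF_snd hρ x (C (-(1 - ρ ^ 2)) * (C b * X - C c))
  have hF' := integrable_eval_mul_bvnPDF_snd hρ x
    ((C b * X - C c) * (X - C (ρ * x)) - C ((1 - ρ ^ 2) * b))
  rw [integral_Ioi_of_hasDerivAt_of_integrableOn hderiv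
    (hF'.congr (ae_of_all _ fun t => by simp)).integrableOn
    (hF.congr (ae_of_all _ fun t => by simp)).integrableOn]
  ring

theorem integral_Ioi_sub_mul_bvnPDF_snd (hρ : |ρ| < 1) (x a : ℝ) :
    ∫ t in Ioi a, (t - ρ * x) * bvnPDF ρ x t = (1 - ρ ^ 2) * bvnPDF ρ x a := by
  simpa using integral_Ioi_stein_bvnPDF_snd hρ x a 0 (-1)

theorem integral_Ioi_sub_mul_bvnPDF_fst (hρ : |ρ| < 1) (y a : ℝ) :
    ∫ t in Ioi a, (t - ρ * y) * bvnPDF ρ t y = (1 - ρ ^ 2) * bvnPDF ρ a y := by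
  simp_rw [bvnPDF_comm ρ _ y]
  exact integral_Ioi_sub_mul_bvnPDF_snd hρ y a

open MvPolynomial in
theorem setIntegral_stein_bvnPDF_fst (hρ : |ρ| < 1) (u v c : ℝ) :
    ∫ p in Ioi u ×ˢ Ioi v, (p.2 - c) * (p.1 - ρ * p.2) * bvnPDF ρ p.1 p.2
      = (1 - ρ ^ 2) * ((1 - ρ ^ 2) * bvnPDF ρ u v
        + (ρ * u - c) * (stdNormalPDF u * stdNormalSurv ((v - ρ * u) / √(1 - ρ ^ 2)))) := by
  have hA : IntegrableOn (fun p : ℝ × ℝ => (p.2 - c) * (p.1 - ρ * p.2) * bvnPDF ρ p.1 p.2)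
      (Ioi u ×ˢ Ioi v) :=
    ((integrable_eval_mul_bvnPDF hρ ((X 1 - C c) * (X 0 - C ρ * X 1))).congr
      (ae_of_all _ fun p => by simp)).integrableOn
  have h1 : IntegrableOn (fun y => (y - ρ * u) * bvnPDF ρ u y) (Ioi v) :=
    ((integrable_eval_mul_bvnPDF_snd hρ u (Polynomial.X - Polynomial.C (ρ * u))).congr
      (ae_of_all _ fun y => by simp)).integrableOn
  have h2 : IntegrableOn (fun y => (ρ * u - c) * bvnPDF ρ u y) (Ioi v) :=
    ((integrable_eval_mul_bvnPDF_snd hρ u (Polynomial.C (ρ * u - c))).congr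
      (ae_of_all _ fun y => by simp)).integrableOn
  rw [Measure.volume_eq_prod, setIntegral_prod_symm _ hA]
  calc ∫ y in Ioi v, ∫ x in Ioi u, (y - c) * (x - ρ * y) * bvnPDF ρ x y
      = ∫ y in Ioi v, (1 - ρ ^ 2) * ((y - ρ * u) * bvnPDF ρ u y
          + (ρ * u - c) * bvnPDF ρ u y) := by
        congr 1 with y
        simp_rw [mul_assoc, integral_const_mul, integral_Ioi_sub_mul_bvnPDF_fst hρ]
        ring
    _ = _ := by
        rw [integral_const_mul, integral_add h1 h2, integral_const_mul,
          integral_Ioi_sub_mul_bvnPDF_snd hρ, integral_Ioi_bvnPDF_snd hρ]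

open MvPolynomial in
theorem setIntegral_stein_bvnPDF_snd (hρ : |ρ| < 1) (u v b c : ℝ) :
    ∫ p in Ioi u ×ˢ Ioi v,
        ((b * p.2 - c) * (p.2 - ρ * p.1) - (1 - ρ ^ 2) * b) * bvnPDF ρ p.1 p.2
      = (1 - ρ ^ 2) * (b * v - c) *
        (stdNormalPDF v * stdNormalSurv ((u - ρ * v) / √(1 - ρ ^ 2))) := by
  have hB : IntegrableOn (fun p : ℝ × ℝ =>
      ((b * p.2 - c) * (p.2 - ρ * p.1) - (1 - ρ ^ 2) * b) * bvnPDF ρ p.1 p.2)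
      (Ioi u ×ˢ Ioi v) :=
    ((integrable_eval_mul_bvnPDF hρ
      ((C b * X 1 - C c) * (X 1 - C ρ * X 0) - C ((1 - ρ ^ 2) * b))).congr
      (ae_of_all _ fun p => by simp)).integrableOn
  rw [Measure.volume_eq_prod, setIntegral_prod _ hB]
  simp_rw [integral_Ioi_stein_bvnPDF_snd hρ _ v, integral_const_mul]
  rw [integral_Ioi_bvnPDF_fst hρ]

open MvPolynomial in
theorem setIntegral_sub_mul_sub_mul_bvnPDF (hρ : |ρ| < 1) (u v : ℝ) :
    ∫ p in Ioi u ×ˢ Ioi v, (p.1 - u) * (p.2 - v) * bvnPDF ρ p.1 p.2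
      = (ρ + u * v) * ell u v ρ + (1 - ρ ^ 2) * bvnPDF ρ u v
        - v * stdNormalPDF u * stdNormalSurv ((v - ρ * u) / √(1 - ρ ^ 2))
        - u * stdNormalPDF v * stdNormalSurv ((u - ρ * v) / √(1 - ρ ^ 2)) := by
  have hs : 1 - ρ ^ 2 ≠ 0 := (one_sub_sq_pos hρ).ne'
  have hf : IntegrableOn (fun p : ℝ × ℝ => bvnPDF ρ p.1 p.2) (Ioi u ×ˢ Ioi v) :=
    ((integrable_eval_mul_bvnPDF hρ 1).congr (ae_of_all _ fun p => by simp)).integrableOn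
  have hA : IntegrableOn
      (fun p : ℝ × ℝ => (p.2 - (v + ρ * u)) * (p.1 - ρ * p.2) * bvnPDF ρ p.1 p.2)
      (Ioi u ×ˢ Ioi v) :=
    ((integrable_eval_mul_bvnPDF hρ ((X 1 - C (v + ρ * u)) * (X 0 - C ρ * X 1))).congr
      (ae_of_all _ fun p => by simp)).integrableOn
  have hB : IntegrableOn (fun p : ℝ × ℝ =>
      ((ρ * p.2 - (u + ρ * v)) * (p.2 - ρ * p.1) - (1 - ρ ^ 2) * ρ) * bvnPDF ρ p.1 p.2)
      (Ioi u ×ˢ Ioi v) :=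
    ((integrable_eval_mul_bvnPDF hρ
      ((C ρ * X 1 - C (u + ρ * v)) * (X 1 - C ρ * X 0) - C ((1 - ρ ^ 2) * ρ))).congr
      (ae_of_all _ fun p => by simp)).integrableOn
  calc ∫ p in Ioi u ×ˢ Ioi v, (p.1 - u) * (p.2 - v) * bvnPDF ρ p.1 p.2
      = ∫ p in Ioi u ×ˢ Ioi v, ((ρ + u * v) * bvnPDF ρ p.1 p.2
          + ((p.2 - (v + ρ * u)) * (p.1 - ρ * p.2) * bvnPDF ρ p.1 p.2
            + ((ρ * p.2 - (u + ρ * v)) * (p.2 - ρ * p.1) - (1 - ρ ^ 2) * ρ)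
              * bvnPDF ρ p.1 p.2) / (1 - ρ ^ 2)) := by
        congr 1 with p
        field_simp
        ring
    _ = _ := by
        rw [integral_add (hf.const_mul _), integral_const_mul, integral_div,
          integral_add hA hB, setIntegral_stein_bvnPDF_fst hρ, setIntegral_stein_bvnPDF_snd hρ,
          Measure.volume_eq_prod, setIntegral_prod _ hf, ell]
        · field_simp
          ring
        · exact (hA.add hB).div_const _

theorem one_sub_sq_mul_bvnPDF_self (hρ : |ρ| < 1) (u : ℝ) :
    (1 - ρ ^ 2) * bvnPDF ρ u u = √(1 - ρ ^ 2) * stdNormalPDF (u / √(1 + ρ)) ^ 2 := by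
  have hs := one_sub_sq_pos hρ
  have hρ' : 0 < 1 + ρ := by linarith [neg_abs_le ρ]
  have hexp : -(u ^ 2 - 2 * ρ * u * u + u ^ 2) / (2 * (1 - ρ ^ 2))
      = -(u / √(1 + ρ)) ^ 2 / 2 + -(u / √(1 + ρ)) ^ 2 / 2 := by
    rw [div_pow, sq_sqrt hρ'.le]
    field_simp
    ring
  unfold bvnPDF stdNormalPDF
  rw [hexp, exp_add, mul_pow, inv_pow, sq_sqrt (by positivity), sq (exp _)]
  field_simp
  rw [sq_sqrt hs.le]

end Bivariate

/-- The covariance of `(X-u)⁺` and `(Y-u)⁺` for a standard bivariate normal pair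
`(X, Y)` with correlation `ρ ∈ (-1, 1)`. -/
theorem stmt_4 (ρ u : ℝ) (hρ₁ : -1 < ρ) (hρ₂ : ρ < 1) :
    (∫ p : ℝ × ℝ, max (p.1 - u) 0 * max (p.2 - u) 0 * bvnPDF ρ p.1 p.2)
        - (stdNormalPDF u - u * stdNormalSurv u) ^ 2
      = (ρ + u ^ 2) * ell u u ρ
        - 2 * u * stdNormalPDF u *
            stdNormalSurv (u * (1 - ρ) / Real.sqrt (1 - ρ ^ 2))
        + Real.sqrt (1 - ρ ^ 2) * stdNormalPDF (u / Real.sqrt (1 + ρ)) ^ 2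
        - (stdNormalPDF u - u * stdNormalSurv u) ^ 2 := by
  have hρ : |ρ| < 1 := abs_lt.2 ⟨hρ₁, hρ₂⟩
  rw [integral_max_sub_mul_max_sub_mul, setIntegral_sub_mul_sub_mul_bvnPDF hρ,
    one_sub_sq_mul_bvnPDF_self hρ, show u - ρ * u = u * (1 - ρ) by ring]
  ring
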